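/- Let A₁ be an H₊-matrix with diagonal part D₁ and let A₁ = (M₁+I-L₁)-(N₁+I-L₁) be an H-compatible splitting, i.e., ⟨A₁⟩ = ⟨M₁+I-L₁⟩ - |N₁+I-L₁|. If Ω₁ is a positive diagonal matrix with Ω₁ ≥ D₁, then ρ(T) < 1 where T = |(M₁+Ω₁+I-L₁)^{-1}|(|N₁+I-L₁| + |Ω₁-A₁|). -/

import Mathlib

open Matrix BigOperators Filter

/-- Componentwise absolute value of a vector. -/
def vecAbs {n : ℕ} (v : Fin n → ℝ) : Fin n → ℝ := fun i => |v i|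

/-- Entrywise absolute value of a matrix. -/
def matAbs {n : ℕ} (A : Matrix (Fin n) (Fin n) ℝ) : Matrix (Fin n) (Fin n) ℝ :=
  Matrix.of fun i j => |A i j|

/-- A Z-matrix: off-diagonal entries are nonpositive. -/
def IsZMatrix {n : ℕ} (A : Matrix (Fin n) (Fin n) ℝ) : Prop :=
  ∀ i j, i ≠ j → A i j ≤ 0

/-- An M-matrix: a Z-matrix that is invertible with entrywise nonnegative inverse. -/
def IsMMatrix {n : ℕ} (A : Matrix (Fin n) (Fin n) ℝ) : Prop :=
  IsZMatrix A ∧ IsUnit A.det ∧ ∀ i j, 0 ≤ A⁻¹ i j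

/-- The comparison matrix ⟨A⟩. -/
def cmpMatrix {n : ℕ} (A : Matrix (Fin n) (Fin n) ℝ) : Matrix (Fin n) (Fin n) ℝ :=
  Matrix.of fun i j => if i = j then |A i j| else -|A i j|

/-- An H-matrix: its comparison matrix is an M-matrix. -/
def IsHMatrix {n : ℕ} (A : Matrix (Fin n) (Fin n) ℝ) : Prop :=
  IsMMatrix (cmpMatrix A)

/-- An H₊-matrix: an H-matrix with positive diagonal entries. -/
def IsHPlusMatrix {n : ℕ} (A : Matrix (Fin n) (Fin n) ℝ) : Prop :=
  IsHMatrix A ∧ ∀ i, 0 < A i i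

/-- A P-matrix: all principal minors are positive. -/
def IsPMatrix {n : ℕ} (A : Matrix (Fin n) (Fin n) ℝ) : Prop :=
  ∀ s : Finset (Fin n),
    0 < (A.submatrix (fun i : s => (i : Fin n)) (fun i : s => (i : Fin n))).det

/-- Spectral radius: supremum of the moduli of the (complex) eigenvalues. -/
noncomputable def specRad {n : ℕ} (A : Matrix (Fin n) (Fin n) ℝ) : ℝ :=
  sSup {x : ℝ | ∃ μ : ℂ, (A.map (Complex.ofReal)).charpoly.IsRoot μ ∧ x = ‖μ‖}

/-- Strictly lower triangular part of a matrix. -/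
def strictLower {n : ℕ} (A : Matrix (Fin n) (Fin n) ℝ) : Matrix (Fin n) (Fin n) ℝ :=
  Matrix.of fun i j => if (j : ℕ) < (i : ℕ) then A i j else 0

/-- Strictly upper triangular part of a matrix. -/
def strictUpper {n : ℕ} (A : Matrix (Fin n) (Fin n) ℝ) : Matrix (Fin n) (Fin n) ℝ :=
  Matrix.of fun i j => if (i : ℕ) < (j : ℕ) then A i j else 0

/-- A positive diagonal matrix. -/
def posDiag {n : ℕ} (Ω : Matrix (Fin n) (Fin n) ℝ) : Prop :=
  (∀ i j, i ≠ j → Ω i j = 0) ∧ ∀ i, 0 < Ω i i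

/-! With `B = M₁ + Ω₁ + 1 - L₁` and `K = |N₁ + 1 - L₁| + |Ω₁ - A₁|`, H-compatibility and
`Ω₁ ≥ D₁` give the entrywise identity `⟨B⟩ = K + 2⟨A₁⟩`. For `v = ⟨A₁⟩⁻¹ 𝟙 > 0` this reads
`⟨B⟩ v = K v + 2 > K v ≥ 0`. Looking at the index maximising `|xᵢ| / vᵢ` shows that
`|B x| < ⟨B⟩ v` forces `|x| < v`; hence `B` is invertible and `|B⁻¹| K v < v`. So `T v < v`
for the nonnegative matrix `T`, and the same maximal-ratio argument applied to an eigenvector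
bounds every eigenvalue of `T` by `1`. -/

section Spectral

variable {ι : Type*} [Fintype ι]

lemma Matrix.exists_mulVec_eq_smul_of_isRoot_charpoly [DecidableEq ι] {K : Type*} [Field K]
    {M : Matrix ι ι K} {μ : K} (h : M.charpoly.IsRoot μ) :
    ∃ x : ι → K, x ≠ 0 ∧ M *ᵥ x = μ • x := by
  have : Module.End.HasEigenvalue (toLin' M) μ := by
    rw [Module.End.hasEigenvalue_iff_mem_spectrum, spectrum_toLin']
    exact mem_spectrum_of_isRoot_charpoly h
  obtain ⟨x, hx⟩ := this.exists_hasEigenvector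
  exact ⟨x, hx.2, by simpa using hx.apply_eq_smul⟩

lemma exists_forall_le_div_mul [Nonempty ι] (y v : ι → ℝ) (hv : ∀ i, 0 < v i) :
    ∃ i₀, ∀ j, y j ≤ y i₀ / v i₀ * v j := by
  obtain ⟨i₀, -, hmax⟩ := Finset.exists_max_image Finset.univ (fun j => y j / v j)
    Finset.univ_nonempty
  exact ⟨i₀, fun j => (div_le_iff₀ (hv j)).1 (hmax j (Finset.mem_univ j))⟩

lemma Matrix.mulVec_le_mulVec_of_nonneg {T : Matrix ι ι ℝ} (hT : ∀ i j, 0 ≤ T i j)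
    {x y : ι → ℝ} (hxy : ∀ j, x j ≤ y j) (i : ι) : (T *ᵥ x) i ≤ (T *ᵥ y) i :=
  Finset.sum_le_sum fun j _ => mul_le_mul_of_nonneg_left (hxy j) (hT i j)

lemma norm_lt_of_isRoot_charpoly_of_mulVec_lt [DecidableEq ι] {T : Matrix ι ι ℝ}
    {v : ι → ℝ} {r : ℝ} (hT : ∀ i j, 0 ≤ T i j) (hv : ∀ i, 0 < v i) (hTv : ∀ i, (T *ᵥ v) i < r * v i)
    {μ : ℂ} (hμ : (T.map Complex.ofReal).charpoly.IsRoot μ) : ‖μ‖ < r := by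
  obtain ⟨x, hx0, hx⟩ := Matrix.exists_mulVec_eq_smul_of_isRoot_charpoly hμ
  obtain ⟨j₀, hj₀⟩ := Function.ne_iff.mp hx0
  let y : ι → ℝ := fun i => ‖x i‖
  have hμy : ∀ i, ‖μ‖ * y i ≤ (T *ᵥ y) i := fun i => by
    calc ‖μ‖ * y i = ‖∑ j, (T i j : ℂ) * x j‖ := by
          rw [← norm_mul, ← smul_eq_mul, ← Pi.smul_apply μ x, ← hx]; rfl
      _ ≤ ∑ j, ‖(T i j : ℂ) * x j‖ := norm_sum_le _ _
      _ = (T *ᵥ y) i := Finset.sum_congr rfl fun j _ => by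
          rw [norm_mul, Complex.norm_real, Real.norm_of_nonneg (hT i j)]
  have : Nonempty ι := ⟨j₀⟩
  obtain ⟨i₀, hi₀⟩ := exists_forall_le_div_mul y v hv
  set c := y i₀ / v i₀
  have hc : 0 < c := pos_of_mul_pos_left ((norm_pos_iff.2 hj₀).trans_le (hi₀ j₀)) (hv j₀).le
  have hyi₀ : y i₀ = c * v i₀ := (div_mul_cancel₀ _ (hv i₀).ne').symm
  have hTy : (T *ᵥ y) i₀ ≤ c * (T *ᵥ v) i₀ := by
    rw [← smul_eq_mul, ← Pi.smul_apply c, ← Matrix.mulVec_smul]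
    exact Matrix.mulVec_le_mulVec_of_nonneg hT hi₀ i₀
  have : ‖μ‖ * (c * v i₀) < r * (c * v i₀) := by
    rw [← hyi₀]
    calc ‖μ‖ * y i₀ ≤ c * (T *ᵥ v) i₀ := (hμy i₀).trans hTy
      _ < c * (r * v i₀) := mul_lt_mul_of_pos_left (hTv i₀) hc
      _ = r * y i₀ := by rw [hyi₀]; ring
  exact lt_of_mul_lt_mul_right this (mul_pos hc (hv i₀)).le

end Spectral

lemma specRad_lt_of_forall_isRoot {n : ℕ} {T : Matrix (Fin n) (Fin n) ℝ} {r : ℝ} (hr : 0 < r)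
    (h : ∀ μ : ℂ, (T.map Complex.ofReal).charpoly.IsRoot μ → ‖μ‖ < r) :
    specRad T < r := by
  set S := {x : ℝ | ∃ μ : ℂ, (T.map Complex.ofReal).charpoly.IsRoot μ ∧ x = ‖μ‖}
  have hfin : S.Finite := by
    have hroots :=
      Polynomial.finite_setOfPred_isRoot (T.map Complex.ofReal).charpoly_monic.ne_zero
    refine (hroots.image fun μ : ℂ => ‖μ‖).subset ?_
    rintro x ⟨μ, hμ, rfl⟩
    exact ⟨μ, hμ, rfl⟩
  show sSup S < r
  rcases S.eq_empty_or_nonempty with hS | hS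
  · rwa [hS, Real.sSup_empty]
  · obtain ⟨μ, hμ, hsup⟩ := hS.csSup_mem hfin
    rw [hsup]
    exact h μ hμ

section Comparison

variable {n : ℕ}

lemma isZMatrix_cmpMatrix (B : Matrix (Fin n) (Fin n) ℝ) : IsZMatrix (cmpMatrix B) :=
  fun i j hij => by simp [cmpMatrix, hij]

lemma IsZMatrix.mulVec_apply_le_of_le_of_eq {P : Matrix (Fin n) (Fin n) ℝ} (hP : IsZMatrix P)
    {u w : Fin n → ℝ} (hwu : ∀ j, w j ≤ u j) {i : Fin n} (hi : w i = u i) :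
    (P *ᵥ u) i ≤ (P *ᵥ w) i := by
  refine sub_nonpos.1 ?_
  rw [← Pi.sub_apply (P *ᵥ u), ← mulVec_sub]
  simp only [mulVec, dotProduct]
  refine Finset.sum_nonpos fun j _ => ?_
  by_cases hij : i = j
  · simp [← hij, hi]
  · exact mul_nonpos_of_nonpos_of_nonneg (hP i j hij) (sub_nonneg.2 (hwu j))

lemma IsMMatrix.exists_pos_mulVec_eq_one {P : Matrix (Fin n) (Fin n) ℝ} (hP : IsMMatrix P) :
    ∃ v : Fin n → ℝ, (∀ i, 0 < v i) ∧ P *ᵥ v = fun _ => 1 := by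
  obtain ⟨hZ, hdet, hinv⟩ := hP
  set v := P⁻¹ *ᵥ fun _ => (1 : ℝ)
  have hPv : P *ᵥ v = fun _ => 1 := by
    rw [mulVec_mulVec, mul_nonsing_inv _ hdet, one_mulVec]
  have hv : ∀ i, 0 ≤ v i := fun i => by
    simp only [v, mulVec, dotProduct, mul_one]
    exact Finset.sum_nonneg fun j _ => hinv i j
  refine ⟨v, fun i => (hv i).lt_of_ne fun hvi => ?_, hPv⟩
  have := hZ.mulVec_apply_le_of_le_of_eq (w := 0) hv hvi
  simp [hPv] at this
  linarith

lemma cmpMatrix_mulVec_vecAbs_le (B : Matrix (Fin n) (Fin n) ℝ) (x : Fin n → ℝ) (i : Fin n) :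
    (cmpMatrix B *ᵥ vecAbs x) i ≤ |(B *ᵥ x) i| := by
  set e := Finset.univ.erase i
  have hrow : (B *ᵥ x) i = B i i * x i + ∑ j ∈ e, B i j * x j :=
    (Finset.add_sum_erase _ _ (Finset.mem_univ i)).symm
  have hcmp : (cmpMatrix B *ᵥ vecAbs x) i = |B i i| * |x i| - ∑ j ∈ e, |B i j| * |x j| := by
    rw [mulVec, dotProduct, ← Finset.add_sum_erase _ _ (Finset.mem_univ i), sub_eq_add_neg,
      ← Finset.sum_neg_distrib]
    refine congrArg₂ _ (by simp [cmpMatrix, vecAbs]) (Finset.sum_congr rfl fun j hj => ?_)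
    simp [cmpMatrix, vecAbs, Ne.symm (Finset.ne_of_mem_erase hj)]
  have hoff : |∑ j ∈ e, B i j * x j| ≤ ∑ j ∈ e, |B i j| * |x j| :=
    (Finset.abs_sum_le_sum_abs _ _).trans_eq (by simp_rw [abs_mul])
  have := abs_sub_abs_le_abs_sub (B i i * x i) (-∑ j ∈ e, B i j * x j)
  rw [abs_neg, sub_neg_eq_add, ← hrow, abs_mul] at this
  linarith

lemma abs_lt_of_abs_mulVec_lt_cmpMatrix_mulVec {B : Matrix (Fin n) (Fin n) ℝ}
    {v x : Fin n → ℝ} (hv : ∀ i, 0 < v i)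
    (hx : ∀ j, |(B *ᵥ x) j| < (cmpMatrix B *ᵥ v) j) (i : Fin n) : |x i| < v i := by
  have : Nonempty (Fin n) := ⟨i⟩
  obtain ⟨i₀, hi₀⟩ := exists_forall_le_div_mul (vecAbs x) v hv
  set c := |x i₀| / v i₀
  have heq : vecAbs x i₀ = (c • v) i₀ := (div_mul_cancel₀ _ (hv i₀).ne').symm
  have hc : c * (cmpMatrix B *ᵥ v) i₀ < 1 * (cmpMatrix B *ᵥ v) i₀ := by
    rw [← smul_eq_mul, ← Pi.smul_apply c, ← mulVec_smul, one_mul]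
    calc (cmpMatrix B *ᵥ c • v) i₀ ≤ (cmpMatrix B *ᵥ vecAbs x) i₀ :=
          (isZMatrix_cmpMatrix B).mulVec_apply_le_of_le_of_eq hi₀ heq
      _ ≤ |(B *ᵥ x) i₀| := cmpMatrix_mulVec_vecAbs_le B x i₀
      _ < _ := hx i₀
  have hc1 := lt_of_mul_lt_mul_right hc ((abs_nonneg _).trans (hx i₀).le)
  calc |x i| ≤ c * v i := hi₀ i
    _ < v i := mul_lt_of_lt_one_left (hv i) hc1

lemma isUnit_det_of_cmpMatrix_mulVec_pos {B : Matrix (Fin n) (Fin n) ℝ} {v : Fin n → ℝ}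
    (hv : ∀ i, 0 < v i) (hBv : ∀ i, 0 < (cmpMatrix B *ᵥ v) i) : IsUnit B.det := by
  refine isUnit_iff_ne_zero.2 fun hdet => ?_
  obtain ⟨x, hx0, hBx⟩ := exists_mulVec_eq_zero_iff.2 hdet
  obtain ⟨j, hj⟩ := Function.ne_iff.1 hx0
  have hxj : 0 < |x j| := abs_pos.2 hj
  have := abs_lt_of_abs_mulVec_lt_cmpMatrix_mulVec (B := B) (x := (v j / |x j|) • x) hv
    (fun i => by simpa [mulVec_smul, hBx] using hBv i) j
  rw [Pi.smul_apply, smul_eq_mul, abs_mul, abs_of_pos (div_pos (hv j) hxj),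
    div_mul_cancel₀ _ hxj.ne'] at this
  exact this.false

lemma matAbs_inv_mulVec_lt {B : Matrix (Fin n) (Fin n) ℝ} {u v : Fin n → ℝ}
    (hv : ∀ i, 0 < v i) (hu : ∀ j, 0 ≤ u j) (huB : ∀ j, u j < (cmpMatrix B *ᵥ v) j)
    (i : Fin n) : (matAbs B⁻¹ *ᵥ u) i < v i := by
  have hB : IsUnit B.det :=
    isUnit_det_of_cmpMatrix_mulVec_pos hv fun j => (hu j).trans_lt (huB j)
  -- signs are chosen so that row `i` of `B⁻¹` sees `u` as `|B⁻¹| u`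
  let y : Fin n → ℝ := fun j => if 0 ≤ B⁻¹ i j then u j else -u j
  have hy : ∀ j, |y j| = u j := fun j => by
    by_cases h : 0 ≤ B⁻¹ i j <;> simp [y, h, abs_of_nonneg (hu j)]
  have hBy : (matAbs B⁻¹ *ᵥ u) i = (B⁻¹ *ᵥ y) i := by
    simp only [mulVec, dotProduct]
    refine Finset.sum_congr rfl fun j _ => ?_
    by_cases h : 0 ≤ B⁻¹ i j
    · simp [matAbs, y, h, abs_of_nonneg h]
    · simp [matAbs, y, h, abs_of_neg (not_le.1 h)]
  rw [hBy]
  refine (le_abs_self _).trans_lt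
    (abs_lt_of_abs_mulVec_lt_cmpMatrix_mulVec (B := B) hv (fun j => ?_) i)
  rw [mulVec_mulVec, mul_nonsing_inv _ hB, one_mulVec, hy]
  exact huB j

end Comparison

lemma cmpMatrix_add_eq {n : ℕ} {A S Ω : Matrix (Fin n) (Fin n) ℝ}
    (hcompat : cmpMatrix A = cmpMatrix S - matAbs (S - A)) (hA : ∀ i, 0 < A i i)
    (hΩ : ∀ i j, i ≠ j → Ω i j = 0) (hAΩ : ∀ i, A i i ≤ Ω i i) :
    cmpMatrix (S + Ω) = matAbs (S - A) + matAbs (Ω - A) + (2 : ℝ) • cmpMatrix A := by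
  ext i j
  have h := congrFun₂ hcompat i j
  by_cases hij : i = j
  · subst hij
    simp only [cmpMatrix, matAbs, of_apply, if_pos, Matrix.sub_apply, Matrix.add_apply,
      Matrix.smul_apply, smul_eq_mul] at h ⊢
    rw [abs_of_pos (hA i)] at h ⊢
    have hSA : A i i ≤ S i i := by
      rcases abs_cases (S i i) with ⟨h₁, h₁'⟩ | ⟨h₁, h₁'⟩ <;>
        rcases abs_cases (S i i - A i i) with ⟨h₂, h₂'⟩ | ⟨h₂, h₂'⟩ <;> linarith [hA i]
    rw [abs_of_nonneg (sub_nonneg.2 hSA), abs_of_nonneg (sub_nonneg.2 (hAΩ i)),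
      abs_of_pos (by linarith [hA i, hAΩ i])]
    ring
  · simp only [cmpMatrix, matAbs, of_apply, if_neg hij, Matrix.sub_apply, Matrix.add_apply,
      Matrix.smul_apply, smul_eq_mul, hΩ i j hij, add_zero, zero_sub, abs_neg] at h ⊢
    linarith

theorem stmt13_general {n : ℕ} (A₁ M₁ N₁ L₁ Ω₁ : Matrix (Fin n) (Fin n) ℝ)
    (hA : IsHPlusMatrix A₁)
    (hΩ : posDiag Ω₁)
    (hsplit : A₁ = (M₁ + 1 - L₁) - (N₁ + 1 - L₁))
    (hcompat : cmpMatrix A₁ = cmpMatrix (M₁ + 1 - L₁) - matAbs (N₁ + 1 - L₁))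
    (hge : ∀ i j, Matrix.diagonal (fun k => A₁ k k) i j ≤ Ω₁ i j) :
    specRad (matAbs ((M₁ + Ω₁ + 1 - L₁)⁻¹) *
      (matAbs (N₁ + 1 - L₁) + matAbs (Ω₁ - A₁))) < 1 := by
  obtain ⟨hAH, hApos⟩ := hA
  obtain ⟨v, hv, hAv⟩ := IsMMatrix.exists_pos_mulVec_eq_one hAH
  have hN : N₁ + 1 - L₁ = (M₁ + 1 - L₁) - A₁ := by rw [hsplit]; abel
  have hB : M₁ + Ω₁ + 1 - L₁ = (M₁ + 1 - L₁) + Ω₁ := by abel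
  rw [hN] at hcompat
  rw [hN, hB]
  set K := matAbs ((M₁ + 1 - L₁) - A₁) + matAbs (Ω₁ - A₁)
  have hK : ∀ i j, 0 ≤ K i j := fun i j => add_nonneg (abs_nonneg _) (abs_nonneg _)
  have hKv : ∀ i, 0 ≤ (K *ᵥ v) i := fun i => by
    simpa using Matrix.mulVec_le_mulVec_of_nonneg hK (x := 0) (fun k => (hv k).le) i
  have hBK : cmpMatrix ((M₁ + 1 - L₁) + Ω₁) = K + (2 : ℝ) • cmpMatrix A₁ :=
    cmpMatrix_add_eq hcompat hApos hΩ.1 fun i => by simpa using hge i i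
  refine specRad_lt_of_forall_isRoot one_pos fun μ hμ =>
    norm_lt_of_isRoot_charpoly_of_mulVec_lt (fun i j => ?_) hv (fun i => ?_) hμ
  · rw [mul_apply]
    exact Finset.sum_nonneg fun k _ => mul_nonneg (abs_nonneg _) (hK k j)
  · rw [one_mul, ← mulVec_mulVec]
    refine matAbs_inv_mulVec_lt hv hKv (fun j => ?_) i
    simp [hBK, add_mulVec, smul_mulVec, hAv]

theorem stmt13 {n : ℕ} (A₁ M₁ N₁ L₁ Ω₁ : Matrix (Fin n) (Fin n) ℝ)
    (hA : IsHPlusMatrix A₁)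
    (hL : L₁ = strictLower A₁) (hΩ : posDiag Ω₁)
    (hsplit : A₁ = (M₁ + 1 - L₁) - (N₁ + 1 - L₁))
    (hcompat : cmpMatrix A₁ = cmpMatrix (M₁ + 1 - L₁) - matAbs (N₁ + 1 - L₁))
    (hge : ∀ i j, Matrix.diagonal (fun k => A₁ k k) i j ≤ Ω₁ i j) :
    specRad (matAbs ((M₁ + Ω₁ + 1 - L₁)⁻¹) *
      (matAbs (N₁ + 1 - L₁) + matAbs (Ω₁ - A₁))) < 1 :=
  stmt13_general A₁ M₁ N₁ L₁ Ω₁ hA hΩ hsplit hcompat hge
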